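/- For every integer n ≥ 1 and every coloring f : {0,…,2^n−1}^3 → {0,1,2,3} satisfying the bmf boundary conditions, there exists a continuous map F : [0,1]^3 → [0,1]^3 that implements f. -/

import Mathlib

/-- α = 2^{-2n} -/
noncomputable def alphaOf (n : ℕ) : ℝ := 2 ^ (-(2 * n : ℤ))

/-- The displacement vectors δ_0 = (−α,−α,−α), δ_1 = (α,0,0), δ_2 = (0,α,0), δ_3 = (0,0,α). -/
noncomputable def deltaOf (n : ℕ) (c : Fin 4) : Fin 3 → ℝ :=
  if c = 0 then (fun _ => -alphaOf n)
  else if c = 1 then (fun m => if m = 0 then alphaOf n else 0)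
  else if c = 2 then (fun m => if m = 1 then alphaOf n else 0)
  else (fun m => if m = 2 then alphaOf n else 0)

/-- Center of the cubelet K_{ijk}: the point 2^{-n}(i + 1/2, j + 1/2, k + 1/2). -/
noncomputable def cubeletCenter (n : ℕ) (i j k : Fin (2 ^ n)) : Fin 3 → ℝ :=
  fun m => (2 : ℝ) ^ (-(n : ℤ)) * (((![(i : ℕ), (j : ℕ), (k : ℕ)] m : ℕ) : ℝ) + 1 / 2)

/-- A cubelet K_{ijk} is exterior if some index equals 0 or 2^n − 1. -/
def ExteriorCubelet (n : ℕ) (i j k : Fin (2 ^ n)) : Prop :=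
  i.val = 0 ∨ j.val = 0 ∨ k.val = 0 ∨
    i.val = 2 ^ n - 1 ∨ j.val = 2 ^ n - 1 ∨ k.val = 2 ^ n - 1

/-- The bmf boundary conditions on a coloring f. -/
def BMFBoundary (n : ℕ) (f : Fin (2 ^ n) → Fin (2 ^ n) → Fin (2 ^ n) → Fin 4) : Prop :=
  ∀ i j k : Fin (2 ^ n),
    (i.val = 0 → f i j k = 1) ∧
    (j.val = 0 → 0 < i.val → f i j k = 2) ∧
    (k.val = 0 → 0 < i.val → 0 < j.val → f i j k = 3) ∧
    (ExteriorCubelet n i j k → 0 < i.val → 0 < j.val → 0 < k.val → f i j k = 0)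

/-- A continuous map F : [0,1]³ → [0,1]³ implements the coloring f :
(a) at each cubelet center, F(x) = x + δ_{f(i,j,k)};
(b) everywhere, F(x) − x lies in the convex hull of the δ-vectors of the cubelets
whose centers lie within L∞ distance 2^{-n} of x. -/
def Implements (n : ℕ) (f : Fin (2 ^ n) → Fin (2 ^ n) → Fin (2 ^ n) → Fin 4)
    (F : (Fin 3 → ℝ) → Fin 3 → ℝ) : Prop :=
  ContinuousOn F (Set.Icc 0 1) ∧
  Set.MapsTo F (Set.Icc 0 1) (Set.Icc 0 1) ∧
  (∀ i j k : Fin (2 ^ n),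
    F (cubeletCenter n i j k) = cubeletCenter n i j k + deltaOf n (f i j k)) ∧
  (∀ x ∈ Set.Icc (0 : Fin 3 → ℝ) 1,
    F x - x ∈ convexHull ℝ
      {v : Fin 3 → ℝ | ∃ i j k : Fin (2 ^ n),
        dist x (cubeletCenter n i j k) ≤ (2 : ℝ) ^ (-(n : ℤ)) ∧ v = deltaOf n (f i j k)})

/-!
The implementing map is `x ↦ x + V x`, where `V x` is the average of the displacements of the
cubelets weighted by the sup-norm tents `max 0 (1 - 2ⁿ ‖x - c‖)` around their centres `c`.
Every point of the cube lies within half a mesh of some centre, so the weights never vanish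
together and `V` is continuous; each centre lies outside the support of every other tent, so
`V` takes the prescribed value there; and `V x` is a convex combination of displacements of
cubelets whose centres are closer than `2⁻ⁿ` to `x`. Finally `α ≤ 2⁻ⁿ / 2`, so within `α` of a
face only cubelets touching that face are active, and there the bmf boundary colours never
point out of the cube: `F` maps the cube to itself.
-/

open Finset

noncomputable def tent {X : Type*} [PseudoMetricSpace X] (r : ℝ) (c x : X) : ℝ :=
  max 0 (1 - dist x c / r)

section Tent

variable {X : Type*} [PseudoMetricSpace X] {r : ℝ}

lemma tent_nonneg (c x : X) : 0 ≤ tent r c x := le_max_left _ _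

lemma continuous_tent (c : X) : Continuous (tent r c) := by
  unfold tent; fun_prop

@[simp] lemma tent_self (c : X) : tent r c c = 1 := by simp [tent]

lemma tent_pos_iff (hr : 0 < r) {c x : X} : 0 < tent r c x ↔ dist x c < r := by
  simp [tent, div_lt_one hr]

lemma tent_eq_zero (hr : 0 < r) {c x : X} (h : r ≤ dist x c) : tent r c x = 0 := by
  simp [tent, one_le_div hr, h]

end Tent

noncomputable def tentBlend {ι X E : Type*} [Fintype ι] [PseudoMetricSpace X] [AddCommGroup E]
    [Module ℝ E] (r : ℝ) (c : ι → X) (z : ι → E) (x : X) : E :=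
  univ.centerMass (fun p => tent r (c p) x) z

section TentBlend

variable {ι X E : Type*} [Fintype ι] [PseudoMetricSpace X] {r : ℝ} {c : ι → X} {x : X}

lemma sum_tent_pos (hr : 0 < r) (hx : ∃ p, dist x (c p) < r) : 0 < ∑ p, tent r (c p) x := by
  obtain ⟨p, hp⟩ := hx
  exact (tent_pos_iff hr |>.2 hp).trans_le
    (single_le_sum (fun q _ => tent_nonneg (c q) x) (mem_univ p))

variable [AddCommGroup E] [Module ℝ E]

lemma tentBlend_mem_convexHull (hr : 0 < r) (z : ι → E) (hx : ∃ p, dist x (c p) < r) :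
    tentBlend r c z x ∈ convexHull ℝ (z '' {p | dist x (c p) < r}) := by
  classical
  rw [tentBlend, ← centerMass_filter_ne_zero]
  refine centerMass_mem_convexHull _ (fun p _ => tent_nonneg _ _) ?_ fun p hp => ?_
  · rw [sum_filter_ne_zero]
    exact sum_tent_pos hr hx
  · exact ⟨p, (tent_pos_iff hr).1 ((tent_nonneg _ _).lt_of_ne' (mem_filter.1 hp).2), rfl⟩

lemma tentBlend_center (hr : 0 < r) (hc : Pairwise fun p q => r ≤ dist (c p) (c q)) (z : ι → E)
    (p : ι) : tentBlend r c z (c p) = z p := by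
  classical
  have hw : (fun q => tent r (c q) (c p)) = fun q => if p = q then 1 else 0 := by
    funext q
    split_ifs with hpq
    · simp [hpq]
    · exact tent_eq_zero hr (hc hpq)
  rw [tentBlend, hw, centerMass_ite_eq _ _ _ (mem_univ p)]

lemma continuousOn_tentBlend [TopologicalSpace E] [ContinuousAdd E] [ContinuousSMul ℝ E]
    (hr : 0 < r) (z : ι → E) {s : Set X} (hs : ∀ x ∈ s, ∃ p, dist x (c p) < r) :
    ContinuousOn (tentBlend r c z) s := by
  have hsum : Continuous fun x => ∑ p, tent r (c p) x :=
    continuous_finsetSum _ fun p _ => continuous_tent (c p)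
  refine (hsum.continuousOn.inv₀ fun x hx => (sum_tent_pos hr (hs x hx)).ne').smul ?_
  exact (continuous_finsetSum _ fun p _ =>
    (continuous_tent (c p)).smul continuous_const).continuousOn

end TentBlend

noncomputable def gridCenter {d : ℕ} (N : ℕ) (p : Fin d → Fin N) : Fin d → ℝ :=
  fun m => ((p m : ℝ) + 1 / 2) / N

section Grid

variable {d N : ℕ}

lemma inv_le_dist_gridCenter {p q : Fin d → Fin N} (hpq : p ≠ q) :
    (N : ℝ)⁻¹ ≤ dist (gridCenter N p) (gridCenter N q) := by
  obtain ⟨m, hm⟩ := Function.ne_iff.1 hpq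
  have hN : (0 : ℝ) < N := by exact_mod_cast (p m).pos
  have hpqm : (1 : ℝ) ≤ |(p m : ℝ) - q m| := by
    rcases Nat.lt_or_gt_of_ne (Fin.val_ne_of_ne hm) with h | h
    · have : (p m : ℝ) + 1 ≤ q m := by exact_mod_cast h
      rw [abs_sub_comm, abs_of_nonneg] <;> linarith
    · have : (q m : ℝ) + 1 ≤ p m := by exact_mod_cast h
      rw [abs_of_nonneg] <;> linarith
  calc (N : ℝ)⁻¹ ≤ |(p m : ℝ) - q m| / N := by rw [inv_eq_one_div]; gcongr
    _ = dist (gridCenter N p m) (gridCenter N q m) := by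
        rw [Real.dist_eq, gridCenter, gridCenter, ← sub_div, abs_div, abs_of_pos hN]; ring_nf
    _ ≤ _ := dist_le_pi_dist _ _ m

lemma exists_abs_sub_cellMidpoint_le (hN : 0 < N) {s : ℝ} (hs : s ∈ Set.Icc (0 : ℝ) 1) :
    ∃ i : Fin N, |s - ((i : ℝ) + 1 / 2) / N| ≤ (2 * N : ℝ)⁻¹ := by
  have hN' : (0 : ℝ) < N := by exact_mod_cast hN
  set t : ℝ := N * s with ht
  have ht0 : 0 ≤ t := mul_nonneg hN'.le hs.1
  have htN : t ≤ N := mul_le_of_le_one_right hN'.le hs.2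
  set i := min ⌊t⌋₊ (N - 1) with hi
  have key : |t - ((i : ℝ) + 1 / 2)| ≤ 1 / 2 := by
    rcases le_total ⌊t⌋₊ (N - 1) with h | h
    · rw [hi, min_eq_left h, abs_le]
      constructor <;> linarith [Nat.floor_le ht0, Nat.lt_floor_add_one t]
    · have hfl : ((N - 1 : ℕ) : ℝ) ≤ t := (Nat.cast_le.2 h).trans (Nat.floor_le ht0)
      rw [Nat.cast_sub hN, Nat.cast_one] at hfl
      rw [hi, min_eq_right h, Nat.cast_sub hN, Nat.cast_one, abs_le]
      constructor <;> linarith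
  refine ⟨⟨i, by omega⟩, ?_⟩
  calc |s - ((i : ℝ) + 1 / 2) / N| = |t - ((i : ℝ) + 1 / 2)| / N := by
        rw [ht, ← abs_of_pos hN', ← abs_div, abs_of_pos hN']; congr 1; field_simp
    _ ≤ 1 / 2 / N := by gcongr
    _ = (2 * N : ℝ)⁻¹ := by field_simp

lemma exists_dist_gridCenter_lt (hN : 0 < N) {x : Fin d → ℝ} (hx : x ∈ Set.Icc 0 1) :
    ∃ p, dist x (gridCenter N p) < (N : ℝ)⁻¹ := by
  have hN' : (0 : ℝ) < N := by exact_mod_cast hN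
  choose p hp using fun m => exists_abs_sub_cellMidpoint_le hN ⟨hx.1 m, hx.2 m⟩
  refine ⟨p, (dist_pi_lt_iff (by positivity)).2 fun m => (hp m).trans_lt ?_⟩
  rw [mul_inv]
  linarith [inv_pos.2 hN']

lemma val_eq_zero_of_dist_gridCenter_lt {x : Fin d → ℝ} {p : Fin d → Fin N}
    (hp : dist x (gridCenter N p) < (N : ℝ)⁻¹) {m : Fin d} (hxm : x m < (2 * N : ℝ)⁻¹) :
    (p m : ℕ) = 0 := by
  have hN : (0 : ℝ) < N := by exact_mod_cast (p m).pos
  have h := (abs_lt.1 ((dist_le_pi_dist x _ m).trans_lt hp)).1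
  rw [gridCenter, div_eq_mul_inv] at h
  by_contra hne
  have : (1 : ℝ) ≤ (p m : ℕ) := by exact_mod_cast Nat.one_le_iff_ne_zero.2 hne
  rw [mul_inv] at hxm
  have : (0 : ℝ) < (N : ℝ)⁻¹ := by positivity
  nlinarith

lemma val_eq_last_of_dist_gridCenter_lt {x : Fin d → ℝ} {p : Fin d → Fin N}
    (hp : dist x (gridCenter N p) < (N : ℝ)⁻¹) {m : Fin d} (hxm : 1 - (2 * N : ℝ)⁻¹ < x m) :
    (p m : ℕ) = N - 1 := by
  have hN : (0 : ℝ) < N := by exact_mod_cast (p m).pos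
  have h := (abs_lt.1 ((dist_le_pi_dist x _ m).trans_lt hp)).2
  rw [gridCenter, div_eq_mul_inv] at h
  by_contra hne
  have : (p m : ℝ) + 2 ≤ N := by exact_mod_cast (show (p m : ℕ) + 2 ≤ N by omega)
  rw [mul_inv] at hxm
  have : (0 : ℝ) < (N : ℝ)⁻¹ := by positivity
  have : (N : ℝ) * (N : ℝ)⁻¹ = 1 := mul_inv_cancel₀ hN.ne'
  nlinarith

end Grid

lemma cubeletCenter_eq_gridCenter {n : ℕ} (p : Fin 3 → Fin (2 ^ n)) :
    cubeletCenter n (p 0) (p 1) (p 2) = gridCenter (2 ^ n) p := by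
  funext m
  fin_cases m <;> simp [cubeletCenter, gridCenter, zpow_neg, div_eq_inv_mul]

lemma two_zpow_neg_natCast (n : ℕ) : (2 : ℝ) ^ (-(n : ℤ)) = ((2 ^ n : ℕ) : ℝ)⁻¹ := by
  simp [zpow_neg]

lemma alphaOf_pos (n : ℕ) : 0 < alphaOf n := by
  unfold alphaOf; positivity

lemma alphaOf_le {n : ℕ} (hn : 1 ≤ n) : alphaOf n ≤ (2 * (2 ^ n : ℕ) : ℝ)⁻¹ := by
  have h2 : (2 : ℝ) ≤ ((2 ^ n : ℕ) : ℝ) := by exact_mod_cast Nat.le_self_pow (by omega) 2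
  have : alphaOf n = ((((2 ^ n : ℕ) : ℝ)) * ((2 ^ n : ℕ) : ℝ))⁻¹ := by
    simp [alphaOf, zpow_neg, two_mul, zpow_add₀]
  rw [this]
  gcongr

section Delta

variable (n : ℕ)

lemma deltaOf_nonneg {c : Fin 4} (hc : c ≠ 0) (m : Fin 3) : 0 ≤ deltaOf n c m := by
  have := alphaOf_pos n
  fin_cases c <;> fin_cases m <;> simp_all [deltaOf, this.le]

lemma deltaOf_nonpos {c : Fin 4} {m : Fin 3} (hc : (c : ℕ) ≠ m + 1) : deltaOf n c m ≤ 0 := by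
  have := alphaOf_pos n
  fin_cases c <;> fin_cases m <;> simp_all [deltaOf, this.le]

lemma neg_alphaOf_le_deltaOf (c : Fin 4) (m : Fin 3) : -alphaOf n ≤ deltaOf n c m := by
  have := alphaOf_pos n
  fin_cases c <;> fin_cases m <;> simp [deltaOf] <;> linarith

lemma deltaOf_le_alphaOf (c : Fin 4) (m : Fin 3) : deltaOf n c m ≤ alphaOf n := by
  have := alphaOf_pos n
  fin_cases c <;> fin_cases m <;> simp [deltaOf] <;> linarith

end Delta

def bmfColor {N : ℕ} (p : Fin 3 → Fin N) : Fin 4 :=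
  if (p 0 : ℕ) = 0 then 1 else if (p 1 : ℕ) = 0 then 2 else if (p 2 : ℕ) = 0 then 3 else 0

section BMF

variable {n N : ℕ} {f : Fin (2 ^ n) → Fin (2 ^ n) → Fin (2 ^ n) → Fin 4}

lemma BMFBoundary.apply_eq_bmfColor (hf : BMFBoundary n f) {p : Fin 3 → Fin (2 ^ n)}
    (hp : ExteriorCubelet n (p 0) (p 1) (p 2)) : f (p 0) (p 1) (p 2) = bmfColor p := by
  obtain ⟨h1, h2, h3, h0⟩ := hf (p 0) (p 1) (p 2)
  unfold bmfColor
  split_ifs with hi hj hk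
  · exact h1 hi
  · exact h2 hj (Nat.pos_of_ne_zero hi)
  · exact h3 hk (Nat.pos_of_ne_zero hi) (Nat.pos_of_ne_zero hj)
  · exact h0 hp (Nat.pos_of_ne_zero hi) (Nat.pos_of_ne_zero hj) (Nat.pos_of_ne_zero hk)

lemma exteriorCubelet_of_val_eq {p : Fin 3 → Fin (2 ^ n)} {m : Fin 3}
    (h : (p m : ℕ) = 0 ∨ (p m : ℕ) = 2 ^ n - 1) : ExteriorCubelet n (p 0) (p 1) (p 2) := by
  unfold ExteriorCubelet
  fin_cases m <;> simp only [Fin.zero_eta, Fin.mk_one, Fin.reduceFinMk] at h <;> tauto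

lemma bmfColor_ne_zero {p : Fin 3 → Fin N} {m : Fin 3} (h : (p m : ℕ) = 0) : bmfColor p ≠ 0 := by
  unfold bmfColor
  fin_cases m <;> simp only [Fin.zero_eta, Fin.mk_one, Fin.reduceFinMk] at h <;>
    split_ifs <;> simp_all

lemma bmfColor_val_ne {p : Fin 3 → Fin N} {m : Fin 3} (h : (p m : ℕ) ≠ 0) :
    (bmfColor p : ℕ) ≠ m + 1 := by
  unfold bmfColor
  fin_cases m <;> simp only [Fin.zero_eta, Fin.mk_one, Fin.reduceFinMk] at h <;>
    split_ifs <;> simp_all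

end BMF

lemma add_deltaOf_mem_Icc {n : ℕ} (hn : 1 ≤ n)
    {f : Fin (2 ^ n) → Fin (2 ^ n) → Fin (2 ^ n) → Fin 4} (hf : BMFBoundary n f)
    {x : Fin 3 → ℝ} (hx : x ∈ Set.Icc 0 1) {p : Fin 3 → Fin (2 ^ n)}
    (hp : dist x (gridCenter (2 ^ n) p) < ((2 ^ n : ℕ) : ℝ)⁻¹) :
    x + deltaOf n (f (p 0) (p 1) (p 2)) ∈ Set.Icc 0 1 := by
  have hα := alphaOf_le hn
  refine ⟨fun m => ?_, fun m => ?_⟩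
  · change 0 ≤ x m + deltaOf n (f (p 0) (p 1) (p 2)) m
    rcases lt_or_ge (x m) (alphaOf n) with hxm | hxm
    · have h0 := val_eq_zero_of_dist_gridCenter_lt hp (hxm.trans_le hα)
      rw [hf.apply_eq_bmfColor (exteriorCubelet_of_val_eq (Or.inl h0))]
      exact add_nonneg (hx.1 m) (deltaOf_nonneg n (bmfColor_ne_zero h0) m)
    · linarith [neg_alphaOf_le_deltaOf n (f (p 0) (p 1) (p 2)) m]
  · change x m + deltaOf n (f (p 0) (p 1) (p 2)) m ≤ 1
    rcases lt_or_ge (1 - alphaOf n) (x m) with hxm | hxm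
    · have hlast := val_eq_last_of_dist_gridCenter_lt hp ((sub_le_sub_left hα 1).trans_lt hxm)
      have hpos : (p m : ℕ) ≠ 0 := by
        have : 2 ≤ 2 ^ n := Nat.le_self_pow (by omega) 2
        omega
      rw [hf.apply_eq_bmfColor (exteriorCubelet_of_val_eq (Or.inr hlast))]
      exact add_le_of_le_of_nonpos (hx.2 m) (deltaOf_nonpos n (bmfColor_val_ne hpos))
    · linarith [deltaOf_le_alphaOf n (f (p 0) (p 1) (p 2)) m]

theorem exists_implementation (n : ℕ) (hn : 1 ≤ n)
    (f : Fin (2 ^ n) → Fin (2 ^ n) → Fin (2 ^ n) → Fin 4)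
    (hf : BMFBoundary n f) :
    ∃ F : (Fin 3 → ℝ) → Fin 3 → ℝ, Implements n f F := by
  set r : ℝ := ((2 ^ n : ℕ) : ℝ)⁻¹
  have hr : 0 < r := by positivity
  set V := tentBlend r (gridCenter (2 ^ n)) fun p : Fin 3 → Fin (2 ^ n) =>
    deltaOf n (f (p 0) (p 1) (p 2))
  have hactive : ∀ x ∈ Set.Icc (0 : Fin 3 → ℝ) 1, ∃ p, dist x (gridCenter (2 ^ n) p) < r :=
    fun x hx => exists_dist_gridCenter_lt (by positivity) hx
  refine ⟨fun x => x + V x, continuousOn_id.add (continuousOn_tentBlend hr _ hactive),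
    fun x hx => ?_, fun i j k => ?_, fun x hx => ?_⟩
  · refine convexHull_min ?_ ((convex_Icc 0 1).translate_preimage_right x)
      (tentBlend_mem_convexHull hr _ (hactive x hx))
    rintro _ ⟨p, hp, rfl⟩
    exact add_deltaOf_mem_Icc hn hf hx hp
  · have hc : cubeletCenter n i j k = gridCenter (2 ^ n) ![i, j, k] :=
      cubeletCenter_eq_gridCenter ![i, j, k]
    simp only [hc, V]
    rw [tentBlend_center hr fun p q hpq => inv_le_dist_gridCenter hpq]
    rfl
  · rw [add_sub_cancel_left]
    refine convexHull_mono ?_ (tentBlend_mem_convexHull hr _ (hactive x hx))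
    rintro _ ⟨p, hp, rfl⟩
    refine ⟨p 0, p 1, p 2, ?_, rfl⟩
    rw [two_zpow_neg_natCast, cubeletCenter_eq_gridCenter]
    exact hp.le
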